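/- arXiv:2002.07676 — 4 statements merged into one kernel-verified Lean document; each statement's English description precedes it below -/
import Mathlib

section
/- Let Y, A, Z be discrete random variables on a probability space, with Y taking values in {0,1} and A in {0,1}. Suppose (i) Y and A are conditionally independent given Z, (ii) Z and A are conditionally independent given Y, and (iii) for every value z of Z with positive probability, 0 < P(A=1|Z=z) < 1 and for every (a,z) with positive probability, 0 < P(Y=1|A=a,Z=z) < 1. Then A is independent of the pair (Z,Y). -/
/-!
Whenever `Z = z` and `Y = y` co-occur with positive probability, calibration and equal error
rates each factor `P(A = a, Z = z, Y = y)` through `P(Z = z, Y = y)`, once with `P(A = a | Z = z)`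
and once with `P(A = a | Y = y)`, so these two conditional probabilities agree. Predictive
uncertainty makes every `z` of positive probability co-occur with both values of `Y`, hence
`P(A = a | Y = y)` does not depend on `y`; by total probability it equals `P(A = a)`, and then
`P(A = a, Z = z, Y = y) = P(Z = z, Y = y) P(A = a)`.
-/

open MeasureTheory ProbabilityTheory Set

section CondProb

variable {Ω : Type*} [MeasurableSpace Ω] {μ : Measure Ω} {s t u : Set Ω}

theorem inter_pos_of_cond_ne_zero' (ht : MeasurableSet t) (hcst : μ[t | s] ≠ 0) :
    0 < μ (s ∩ t) := by
  rw [cond_apply' ht] at hcst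
  exact pos_iff_ne_zero.mpr (right_ne_zero_of_mul hcst)

theorem measure_inter_inter_eq_mul_cond [IsFiniteMeasure μ] (hs : MeasurableSet s)
    (h : μ[t ∩ u | s] = μ[t | s] * μ[u | s]) : μ (s ∩ (t ∩ u)) = μ (s ∩ t) * μ[u | s] := by
  rw [← cond_mul_eq_inter hs, ← cond_mul_eq_inter hs, h]
  ring

theorem cond_eq_cond_of_cond_inter_eq_mul [IsFiniteMeasure μ] (hs : MeasurableSet s)
    (ht : MeasurableSet t) (hst : μ (s ∩ t) ≠ 0)
    (hs_indep : μ[t ∩ u | s] = μ[t | s] * μ[u | s])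
    (ht_indep : μ[s ∩ u | t] = μ[s | t] * μ[u | t]) : μ[u | s] = μ[u | t] := by
  have hs_fac := measure_inter_inter_eq_mul_cond hs hs_indep
  have ht_fac := measure_inter_inter_eq_mul_cond ht ht_indep
  rw [← inter_assoc] at hs_fac
  rw [← inter_assoc, inter_comm t s] at ht_fac
  exact (ENNReal.mul_right_inj hst (measure_ne_top μ _)).mp (hs_fac.symm.trans ht_fac)

theorem measure_eq_cond_of_cond_eq_cond_compl [IsProbabilityMeasure μ] (hs : MeasurableSet s)
    (h : μ[t | s] = μ[t | sᶜ]) : μ t = μ[t | s] := by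
  rw [← cond_add_cond_compl_eq hs μ, ← h, ← mul_add, measure_add_measure_compl hs, measure_univ,
    mul_one]

end CondProb

theorem preimage_singleton_true_compl {α : Type*} (X : α → Bool) :
    (X ⁻¹' {true})ᶜ = X ⁻¹' {false} := by
  rw [← preimage_compl, Bool.compl_singleton, Bool.not_true]

theorem measure_preimage_bool_pos {Ω : Type*} [MeasurableSpace Ω] {ν : Measure Ω}
    [IsProbabilityMeasure ν] {X : Ω → Bool} (hX : Measurable X)
    (h_pos : 0 < ν (X ⁻¹' {true})) (h_lt : ν (X ⁻¹' {true}) < 1) (b : Bool) :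
    0 < ν (X ⁻¹' {b}) := by
  cases b
  · rw [← preimage_singleton_true_compl X,
      prob_compl_eq_one_sub (hX (measurableSet_singleton true))]
    exact tsub_pos_of_lt h_lt
  · exact h_pos

theorem fairness_impossibility_general
    {Ω γ : Type*} [MeasurableSpace Ω] (μ : Measure Ω) [IsProbabilityMeasure μ]
    [MeasurableSpace γ] [MeasurableSingletonClass γ]
    (Y A : Ω → Bool) (Z : Ω → γ)
    (hY : Measurable Y) (hZ : Measurable Z)
    -- (i) Y ⟂ A | Z
    (hYA_Z : ∀ z, μ (Z ⁻¹' {z}) ≠ 0 → ∀ y a,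
      μ[|Z ⁻¹' {z}] (Y ⁻¹' {y} ∩ A ⁻¹' {a}) =
        μ[|Z ⁻¹' {z}] (Y ⁻¹' {y}) * μ[|Z ⁻¹' {z}] (A ⁻¹' {a}))
    -- (ii) Z ⟂ A | Y
    (hZA_Y : ∀ y, μ (Y ⁻¹' {y}) ≠ 0 → ∀ z a,
      μ[|Y ⁻¹' {y}] (Z ⁻¹' {z} ∩ A ⁻¹' {a}) =
        μ[|Y ⁻¹' {y}] (Z ⁻¹' {z}) * μ[|Y ⁻¹' {y}] (A ⁻¹' {a}))
    -- (iii) 0 < P(A=1|Z=z) < 1 and 0 < P(Y=1|A=a,Z=z) < 1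
    (hposA : ∀ z, μ (Z ⁻¹' {z}) ≠ 0 →
      0 < μ[|Z ⁻¹' {z}] (A ⁻¹' {true}) ∧ μ[|Z ⁻¹' {z}] (A ⁻¹' {true}) < 1)
    (hposY : ∀ a z, μ (A ⁻¹' {a} ∩ Z ⁻¹' {z}) ≠ 0 →
      0 < μ[|A ⁻¹' {a} ∩ Z ⁻¹' {z}] (Y ⁻¹' {true}) ∧
        μ[|A ⁻¹' {a} ∩ Z ⁻¹' {z}] (Y ⁻¹' {true}) < 1) :
    -- A is independent of (Z, Y)
    ∀ a z y, μ (A ⁻¹' {a} ∩ (Z ⁻¹' {z} ∩ Y ⁻¹' {y})) =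
      μ (A ⁻¹' {a}) * μ (Z ⁻¹' {z} ∩ Y ⁻¹' {y}) := by
  intro a z y
  obtain hzy | hzy := eq_or_ne (μ (Z ⁻¹' {z} ∩ Y ⁻¹' {y})) 0
  · rw [hzy, mul_zero]
    exact measure_mono_null inter_subset_right hzy
  have mZ : MeasurableSet (Z ⁻¹' {z}) := hZ (measurableSet_singleton z)
  have mY (y' : Bool) : MeasurableSet (Y ⁻¹' {y'}) := hY (measurableSet_singleton y')
  have hz : μ (Z ⁻¹' {z}) ≠ 0 := fun h => hzy (measure_inter_null_of_null_left _ h)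
  have hAZ : μ (A ⁻¹' {true} ∩ Z ⁻¹' {z}) ≠ 0 := by
    rw [inter_comm]
    exact (inter_pos_of_cond_ne_zero mZ (hposA z hz).1.ne').ne'
  have hZY (y' : Bool) : μ (Z ⁻¹' {z} ∩ Y ⁻¹' {y'}) ≠ 0 := by
    have := cond_isProbabilityMeasure hAZ
    have hpos := measure_preimage_bool_pos hY (hposY true z hAZ).1 (hposY true z hAZ).2 y'
    refine ((inter_pos_of_cond_ne_zero' (mY y') hpos.ne').trans_le (measure_mono ?_)).ne'
    exact inter_subset_inter_left _ inter_subset_right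
  have hcond (y' : Bool) : μ[A ⁻¹' {a} | Z ⁻¹' {z}] = μ[A ⁻¹' {a} | Y ⁻¹' {y'}] :=
    cond_eq_cond_of_cond_inter_eq_mul mZ (mY y') (hZY y') (hYA_Z z hz y' a)
      (hZA_Y y' (fun h => hZY y' (measure_inter_null_of_null_right _ h)) z a)
  have hA : μ (A ⁻¹' {a}) = μ[A ⁻¹' {a} | Z ⁻¹' {z}] := by
    rw [hcond true]
    refine measure_eq_cond_of_cond_eq_cond_compl (mY true) ?_
    rw [preimage_singleton_true_compl Y, ← hcond true, ← hcond false]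
  calc μ (A ⁻¹' {a} ∩ (Z ⁻¹' {z} ∩ Y ⁻¹' {y}))
      = μ (Z ⁻¹' {z} ∩ (Y ⁻¹' {y} ∩ A ⁻¹' {a})) := by rw [inter_comm, inter_assoc]
    _ = μ (Z ⁻¹' {z} ∩ Y ⁻¹' {y}) * μ[A ⁻¹' {a} | Z ⁻¹' {z}] :=
      measure_inter_inter_eq_mul_cond mZ (hYA_Z z hz y a)
    _ = μ (A ⁻¹' {a}) * μ (Z ⁻¹' {z} ∩ Y ⁻¹' {y}) := by rw [hA, mul_comm]

/-- The general fairness impossibility theorem. If Y and A are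
conditionally independent given Z (calibration), Z and A are conditionally
independent given Y (equal error rates), and there is predictive uncertainty
(condition (iii)), then A is independent of the pair (Z, Y). -/
theorem fairness_impossibility
    {Ω γ : Type*} [MeasurableSpace Ω] (μ : Measure Ω) [IsProbabilityMeasure μ]
    [MeasurableSpace γ] [MeasurableSingletonClass γ] [Countable γ]
    (Y A : Ω → Bool) (Z : Ω → γ)
    (hY : Measurable Y) (hA : Measurable A) (hZ : Measurable Z)
    -- (i) Y ⟂ A | Z
    (hYA_Z : ∀ z, μ (Z ⁻¹' {z}) ≠ 0 → ∀ y a,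
      μ[|Z ⁻¹' {z}] (Y ⁻¹' {y} ∩ A ⁻¹' {a}) =
        μ[|Z ⁻¹' {z}] (Y ⁻¹' {y}) * μ[|Z ⁻¹' {z}] (A ⁻¹' {a}))
    -- (ii) Z ⟂ A | Y
    (hZA_Y : ∀ y, μ (Y ⁻¹' {y}) ≠ 0 → ∀ z a,
      μ[|Y ⁻¹' {y}] (Z ⁻¹' {z} ∩ A ⁻¹' {a}) =
        μ[|Y ⁻¹' {y}] (Z ⁻¹' {z}) * μ[|Y ⁻¹' {y}] (A ⁻¹' {a}))
    -- (iii) 0 < P(A=1|Z=z) < 1 and 0 < P(Y=1|A=a,Z=z) < 1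
    (hposA : ∀ z, μ (Z ⁻¹' {z}) ≠ 0 →
      0 < μ[|Z ⁻¹' {z}] (A ⁻¹' {true}) ∧ μ[|Z ⁻¹' {z}] (A ⁻¹' {true}) < 1)
    (hposY : ∀ a z, μ (A ⁻¹' {a} ∩ Z ⁻¹' {z}) ≠ 0 →
      0 < μ[|A ⁻¹' {a} ∩ Z ⁻¹' {z}] (Y ⁻¹' {true}) ∧
        μ[|A ⁻¹' {a} ∩ Z ⁻¹' {z}] (Y ⁻¹' {true}) < 1) :
    -- A is independent of (Z, Y)
    ∀ a z y, μ (A ⁻¹' {a} ∩ (Z ⁻¹' {z} ∩ Y ⁻¹' {y})) =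
      μ (A ⁻¹' {a}) * μ (Z ⁻¹' {z} ∩ Y ⁻¹' {y}) :=
  fairness_impossibility_general μ Y A Z hY hZ hYA_Z hZA_Y hposA hposY
end

section
/- Let (Y, A) be discrete random variables with Y ∈ {0,1}, and let ŷ be a binary classifier. Suppose ŷ = 1{p̂ ≥ p̄} for some [0,1]-valued random variable p̂ that is calibrated within groups, i.e., E[Y | p̂, A] = p̂. Then for every group a with P(ŷ=1, A=a) > 0, the positive predictive value satisfies P(Y=1 | ŷ=1, A=a) ≥ p̄, and for every group a with P(ŷ=0, A=a) > 0, P(Y=1 | ŷ=0, A=a) < p̄ (assuming p̂ < p̄ on the event ŷ=0 with positive conditional probability mass strictly below p̄). -/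
/-! Calibration within groups makes `p̂` a version of `E[Y | p̂, A]`, so for every event `S`
determined by `(p̂, A)` the conditional probability `P(Y = 1 | S)` equals the average of `p̂`
over `S`. The events `{p̂ ≥ p̄, A = a}` and `{p̂ < p̄, A = a}` are of this kind, and on them `p̂`
is `≥ p̄`, resp. `< p̄`, hence so is its average. -/

open MeasureTheory ProbabilityTheory

section

variable {α : Type*} {m m₀ : MeasurableSpace α} {μ : Measure α} {s : Set α} {f : α → ℝ} {c : ℝ}

lemma le_setAverage_of_ae_le (h0 : μ s ≠ 0) (hs : μ s ≠ ⊤) (hf : IntegrableOn f s μ)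
    (hle : ∀ᵐ x ∂μ.restrict s, c ≤ f x) : c ≤ ⨍ x in s, f x ∂μ :=
  (convex_Ici c).set_average_mem isClosed_Ici h0 hs hle hf

lemma setAverage_lt_of_forall_lt (h0 : μ s ≠ 0) (hs : μ s ≠ ⊤) (hf : IntegrableOn f s μ)
    (hlt : ∀ x ∈ s, f x < c) : ⨍ x in s, f x ∂μ < c :=
  let ⟨x, hxs, hx⟩ := exists_setAverage_le h0 hs hf
  hx.trans_lt (hlt x hxs)

lemma setIntegral_eq_measureReal_of_forall_eq_zero_or_one {Y : α → ℝ} (hYm : Measurable Y)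
    (hY : ∀ x, Y x = 0 ∨ Y x = 1) (s : Set α) :
    ∫ x in s, Y x ∂μ = μ.real (s ∩ {x | Y x = 1}) := by
  have hT : MeasurableSet {x | Y x = 1} := hYm (measurableSet_singleton 1)
  calc ∫ x in s, Y x ∂μ = ∫ x in s, {x | Y x = 1}.indicator 1 x ∂μ := by
        congr 1 with x
        rcases hY x with h | h <;> simp [h]
    _ = μ.real (s ∩ {x | Y x = 1}) := by
        rw [setIntegral_indicator hT]
        simp

lemma integrable_of_forall_eq_zero_or_one [IsFiniteMeasure μ] {Y : α → ℝ} (hYm : Measurable Y)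
    (hY : ∀ x, Y x = 0 ∨ Y x = 1) : Integrable Y μ :=
  .of_bound hYm.aestronglyMeasurable 1 <| .of_forall fun x => by rcases hY x with h | h <;> simp [h]

lemma cond_toReal_eq_setAverage_of_condExp_ae_eq [IsFiniteMeasure μ]
    (hm : m ≤ m₀) {Y p : α → ℝ} (hYm : Measurable Y) (hY : ∀ x, Y x = 0 ∨ Y x = 1)
    (hcal : μ[Y | m] =ᵐ[μ] p) (hs : MeasurableSet[m] s) :
    (μ[{x | Y x = 1} | s]).toReal = ⨍ x in s, p x ∂μ := by
  have hint : ∫ x in s, p x ∂μ = μ.real (s ∩ {x | Y x = 1}) := calc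
    ∫ x in s, p x ∂μ = ∫ x in s, (μ[Y | m]) x ∂μ :=
      setIntegral_congr_ae (hm s hs) (hcal.mono fun x hx _ => hx.symm)
    _ = ∫ x in s, Y x ∂μ := setIntegral_condExp hm (integrable_of_forall_eq_zero_or_one hYm hY) hs
    _ = μ.real (s ∩ {x | Y x = 1}) := setIntegral_eq_measureReal_of_forall_eq_zero_or_one hYm hY s
  rw [cond_apply (hm s hs), ENNReal.toReal_mul, ENNReal.toReal_inv, setAverage_eq, hint,
    smul_eq_mul]
  rfl

end

theorem cutoff_of_calibrated_implies_ppv_npv_general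
    {Ω α : Type*} [MeasurableSpace Ω] (μ : Measure Ω) [IsProbabilityMeasure μ]
    [MeasurableSpace α] [MeasurableSingletonClass α]
    (Y : Ω → ℝ) (hYm : Measurable Y) (hYval : ∀ ω, Y ω = 0 ∨ Y ω = 1)
    (A : Ω → α) (hAm : Measurable A)
    (phat : Ω → ℝ) (hphatm : Measurable phat)
    -- calibration within groups: E[Y | p̂, A] = p̂
    (hcal : μ[Y | MeasurableSpace.comap (fun ω => (phat ω, A ω)) inferInstance]
      =ᵐ[μ] phat)
    (pbar : ℝ) :
    -- PPV ≥ p̄ for every group with P(ŷ=1, A=a) > 0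
    (∀ a, μ ({ω | pbar ≤ phat ω} ∩ A ⁻¹' {a}) ≠ 0 →
      pbar ≤ (μ[|{ω | pbar ≤ phat ω} ∩ A ⁻¹' {a}] {ω | Y ω = 1}).toReal) ∧
    -- P(Y=1 | ŷ=0, A=a) < p̄ for every group with P(ŷ=0, A=a) > 0
    (∀ a, μ ({ω | phat ω < pbar} ∩ A ⁻¹' {a}) ≠ 0 →
      (μ[|{ω | phat ω < pbar} ∩ A ⁻¹' {a}] {ω | Y ω = 1}).toReal < pbar) := by
  set m := MeasurableSpace.comap (fun ω => (phat ω, A ω)) inferInstance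
  have hm : m ≤ _ := (hphatm.prodMk hAm).comap_le
  have hphat : Integrable phat μ := integrable_condExp.congr hcal
  have hgroup (B : Set ℝ) (hB : MeasurableSet B) (a : α) :
      MeasurableSet[m] (phat ⁻¹' B ∩ A ⁻¹' {a}) :=
    ⟨B ×ˢ {a}, hB.prod (measurableSet_singleton a), rfl⟩
  refine ⟨fun a ha => ?_, fun a ha => ?_⟩
  · have hS : MeasurableSet[m] ({ω | pbar ≤ phat ω} ∩ A ⁻¹' {a}) :=
      hgroup _ measurableSet_Ici a
    rw [cond_toReal_eq_setAverage_of_condExp_ae_eq hm hYm hYval hcal hS]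
    exact le_setAverage_of_ae_le ha (measure_ne_top μ _) hphat.integrableOn
      (ae_restrict_of_forall_mem (hm _ hS) fun ω hω => hω.1)
  · have hS : MeasurableSet[m] ({ω | phat ω < pbar} ∩ A ⁻¹' {a}) :=
      hgroup _ measurableSet_Iio a
    rw [cond_toReal_eq_setAverage_of_condExp_ae_eq hm hYm hYval hcal hS]
    exact setAverage_lt_of_forall_lt ha (measure_ne_top μ _) hphat.integrableOn fun ω hω => hω.1

/-- Necessity direction: if ŷ = 1{p̂ ≥ p̄} for a score p̂ calibrated
within groups, then each group's positive predictive value is at least p̄ and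
each group's probability P(Y=1 | ŷ=0, A=a) is strictly below p̄. -/
theorem cutoff_of_calibrated_implies_ppv_npv
    {Ω α : Type*} [MeasurableSpace Ω] (μ : Measure Ω) [IsProbabilityMeasure μ]
    [MeasurableSpace α] [MeasurableSingletonClass α]
    (Y : Ω → ℝ) (hYm : Measurable Y) (hYval : ∀ ω, Y ω = 0 ∨ Y ω = 1)
    (A : Ω → α) (hAm : Measurable A)
    (phat : Ω → ℝ) (hphatm : Measurable phat)
    (hrange : ∀ ω, phat ω ∈ Set.Icc (0 : ℝ) 1)
    -- calibration within groups: E[Y | p̂, A] = p̂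
    (hcal : μ[Y | MeasurableSpace.comap (fun ω => (phat ω, A ω)) inferInstance]
      =ᵐ[μ] phat)
    (pbar : ℝ) (hpbar : pbar ∈ Set.Ioo (0 : ℝ) 1) :
    -- PPV ≥ p̄ for every group with P(ŷ=1, A=a) > 0
    (∀ a, μ ({ω | pbar ≤ phat ω} ∩ A ⁻¹' {a}) ≠ 0 →
      pbar ≤ (μ[|{ω | pbar ≤ phat ω} ∩ A ⁻¹' {a}] {ω | Y ω = 1}).toReal) ∧
    -- P(Y=1 | ŷ=0, A=a) < p̄ for every group with P(ŷ=0, A=a) > 0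
    (∀ a, μ ({ω | phat ω < pbar} ∩ A ⁻¹' {a}) ≠ 0 →
      (μ[|{ω | phat ω < pbar} ∩ A ⁻¹' {a}] {ω | Y ω = 1}).toReal < pbar) :=
  cutoff_of_calibrated_implies_ppv_npv_general μ Y hYm hYval A hAm phat hphatm hcal pbar
end

section
/- Let (Y, A, ŷ) be discrete random variables with Y, ŷ ∈ {0,1}, and suppose that for each group a, P(Y=1 | ŷ=1, A=a) ≥ p̄ and P(Y=1 | ŷ=0, A=a) < p̄ (whenever the conditioning events have positive probability). Define p̂ = P(Y=1 | ŷ, A) (a function of ŷ and A). Then p̂ is calibrated, i.e., E[Y | p̂, A] = p̂, and ŷ = 1{p̂ ≥ p̄} almost surely. -/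
/-!
Both claims are statements about the cells `{ŷ = v, A = a}`, on each of which `p̂` is the constant
`P(Y = 1 | cell)`. Inside a group, a level set `{p̂ = r}` is the union of the cells whose conditional
probability is `r`, so conditioning on it again gives `r`. Almost every `ω` lies in a cell of
positive measure, and there the PPV / NPV hypotheses place `p̂ ω` on the side of `p̄` given by `ŷ ω`.
-/

open MeasureTheory ProbabilityTheory

namespace ProbabilityTheory

variable {Ω β : Type*} [MeasurableSpace Ω] {μ : Measure Ω}

noncomputable def condScore (μ : Measure Ω) (f : Ω → β) (B : Set Ω) (ω : Ω) : ℝ :=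
  (μ[B | f ⁻¹' {f ω}]).toReal

lemma measureReal_inter_eq_cond_mul [IsFiniteMeasure μ] {s : Set Ω} (hs : MeasurableSet s)
    (B : Set Ω) : μ.real (s ∩ B) = (μ[B | s]).toReal * μ.real s := by
  rw [measureReal_def, ← cond_mul_eq_inter hs, ENNReal.toReal_mul, measureReal_def]

lemma levelSet_condScore_inter_preimage (f : Ω → β) (B : Set Ω) (r : ℝ) (T : Set β) :
    {ω | condScore μ f B ω = r} ∩ f ⁻¹' T
      = f ⁻¹' {x ∈ T | (μ[B | f ⁻¹' {x}]).toReal = r} := by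
  ext ω
  simp [condScore, and_comm]

lemma ae_measure_preimage_singleton_ne_zero {f : Ω → β} (hf : (Set.range f).Countable) :
    ∀ᵐ ω ∂μ, μ (f ⁻¹' {f ω}) ≠ 0 := by
  set N := {x ∈ Set.range f | μ (f ⁻¹' {x}) = 0}
  have hN : μ (⋃ x ∈ N, f ⁻¹' {x}) = 0 :=
    (measure_biUnion_null_iff (hf.mono (Set.sep_subset _ _))).2 fun x hx => hx.2
  rw [ae_iff]
  refine measure_mono_null (fun ω hω => ?_) hN
  exact Set.mem_biUnion (x := f ω) ⟨Set.mem_range_self ω, not_not.1 hω⟩ rfl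

variable [MeasurableSpace β] [MeasurableSingletonClass β] [IsFiniteMeasure μ] {f : Ω → β}

lemma measureReal_preimage_finset (hf : Measurable f) (T : Finset β) :
    μ.real (f ⁻¹' T) = ∑ x ∈ T, μ.real (f ⁻¹' {x}) := by
  rw [← Set.biUnion_preimage_singleton]
  exact measureReal_biUnion_finset
    (fun x _ y _ hxy => (Set.disjoint_singleton.2 hxy).preimage f)
    fun x _ => hf (measurableSet_singleton x)

lemma cond_preimage_finset_eq (hf : Measurable f) {B : Set Ω} {r : ℝ} (T : Finset β)
    (hT : ∀ x ∈ T, (μ[B | f ⁻¹' {x}]).toReal = r) (hne : μ (f ⁻¹' T) ≠ 0) :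
    (μ[B | f ⁻¹' T]).toReal = r := by
  have hmeas : MeasurableSet (f ⁻¹' T) := hf T.finite_toSet.measurableSet
  have hinter : μ.real (f ⁻¹' T ∩ B) = r * μ.real (f ⁻¹' T) := calc
    -- going through `μ.restrict B` spares a measurability assumption on `B`
    μ.real (f ⁻¹' T ∩ B) = (μ.restrict B).real (f ⁻¹' T) := (measureReal_restrict_apply hmeas).symm
    _ = ∑ x ∈ T, μ.real (f ⁻¹' {x} ∩ B) := by
      simp only [measureReal_preimage_finset hf,
        measureReal_restrict_apply (hf (measurableSet_singleton _))]
    _ = ∑ x ∈ T, r * μ.real (f ⁻¹' {x}) := Finset.sum_congr rfl fun x hx => by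
      rw [measureReal_inter_eq_cond_mul (hf (measurableSet_singleton x)), hT x hx]
    _ = r * μ.real (f ⁻¹' T) := by rw [← Finset.mul_sum, measureReal_preimage_finset hf]
  rw [measureReal_inter_eq_cond_mul hmeas] at hinter
  exact mul_right_cancel₀ ((measureReal_ne_zero_iff (by finiteness)).2 hne) hinter

lemma cond_levelSet_condScore_inter_preimage (hf : Measurable f) (B : Set Ω) (r : ℝ)
    (T : Finset β) (hne : μ ({ω | condScore μ f B ω = r} ∩ f ⁻¹' T) ≠ 0) :
    (μ[B | {ω | condScore μ f B ω = r} ∩ f ⁻¹' T]).toReal = r := by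
  classical
  have hT : {x ∈ (T : Set β) | (μ[B | f ⁻¹' {x}]).toReal = r}
      = ↑(T.filter fun x => (μ[B | f ⁻¹' {x}]).toReal = r) := by simp
  rw [levelSet_condScore_inter_preimage, hT] at hne ⊢
  exact cond_preimage_finset_eq hf _ (fun x hx => (Finset.mem_filter.1 hx).2) hne

end ProbabilityTheory

theorem ppv_npv_implies_cutoff_of_calibrated_general
    {Ω α : Type*} [MeasurableSpace Ω] (μ : Measure Ω) [IsProbabilityMeasure μ]
    [MeasurableSpace α] [MeasurableSingletonClass α] [Countable α]
    (Y yhat : Ω → ℝ) (hyhatm : Measurable yhat)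
    (hyhatval : ∀ ω, yhat ω = 0 ∨ yhat ω = 1)
    (A : Ω → α) (hAm : Measurable A)
    (pbar : ℝ)
    -- group-specific PPV exceeds p̄
    (hPPV : ∀ a, μ ({ω | yhat ω = 1} ∩ A ⁻¹' {a}) ≠ 0 →
      pbar ≤ (μ[|{ω | yhat ω = 1} ∩ A ⁻¹' {a}] {ω | Y ω = 1}).toReal)
    -- group-specific P(Y=1 | ŷ=0, A=a) is below p̄
    (hNPV : ∀ a, μ ({ω | yhat ω = 0} ∩ A ⁻¹' {a}) ≠ 0 →
      (μ[|{ω | yhat ω = 0} ∩ A ⁻¹' {a}] {ω | Y ω = 1}).toReal < pbar)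
    -- the score p̂(ŷ, A) = P(Y=1 | ŷ, A)
    (phat : Ω → ℝ)
    (hphat : phat = fun ω =>
      (μ[|{ω' | yhat ω' = yhat ω} ∩ {ω' | A ω' = A ω}] {ω' | Y ω' = 1}).toReal) :
    -- p̂ is calibrated within groups: E[Y | p̂ = r, A = a] = r
    (∀ r a, μ ({ω | phat ω = r} ∩ A ⁻¹' {a}) ≠ 0 →
      (μ[|{ω | phat ω = r} ∩ A ⁻¹' {a}] {ω | Y ω = 1}).toReal = r) ∧
    -- ŷ = 1{p̂ ≥ p̄} almost surely
    (∀ᵐ ω ∂μ, yhat ω = if pbar ≤ phat ω then (1 : ℝ) else 0) := by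
  classical
  set f : Ω → ℝ × α := fun ω => (yhat ω, A ω)
  have hcell : ∀ v a, f ⁻¹' {(v, a)} = {ω | yhat ω = v} ∩ A ⁻¹' {a} := fun v a => by
    ext; simp [f]
  have hphat_eq : phat = condScore μ f {ω | Y ω = 1} := by
    subst hphat; ext ω; rw [condScore, hcell]; rfl
  subst hphat_eq
  refine ⟨fun r a hne => ?_, ?_⟩
  · have hgroup : A ⁻¹' {a} = f ⁻¹' ↑({(0, a), (1, a)} : Finset (ℝ × α)) := by
      ext ω; rcases hyhatval ω with h | h <;> simp [f, h]
    rw [hgroup] at hne ⊢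
    exact cond_levelSet_condScore_inter_preimage (hyhatm.prodMk hAm) _ r _ hne
  · have hrange : (Set.range f).Countable :=
      ((Set.toFinite ({0, 1} : Set ℝ)).countable.prod (Set.range A).to_countable).mono
        (Set.range_subset_iff.2 fun ω =>
          Set.mk_mem_prod (by simpa using hyhatval ω) (Set.mem_range_self ω))
    filter_upwards [ae_measure_preimage_singleton_ne_zero hrange] with ω hω
    rw [condScore]
    rcases hyhatval ω with h | h <;> simp only [f, h, hcell] at hω ⊢
    · simp [(hNPV _ hω).not_ge]
    · simp [hPPV _ hω]

/-- Sufficiency direction: a classifier whose group-specific PPV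
is at least p̄ and whose group-specific P(Y=1 | ŷ=0, A=a) is below p̄ can be
realized as the cutoff rule at p̄ applied to the calibrated two-valued-per-group
score p̂(ŷ, A) = P(Y=1 | ŷ, A). -/
theorem ppv_npv_implies_cutoff_of_calibrated
    {Ω α : Type*} [MeasurableSpace Ω] (μ : Measure Ω) [IsProbabilityMeasure μ]
    [MeasurableSpace α] [MeasurableSingletonClass α] [Countable α]
    (Y yhat : Ω → ℝ) (hYm : Measurable Y) (hyhatm : Measurable yhat)
    (hYval : ∀ ω, Y ω = 0 ∨ Y ω = 1) (hyhatval : ∀ ω, yhat ω = 0 ∨ yhat ω = 1)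
    (A : Ω → α) (hAm : Measurable A)
    (pbar : ℝ)
    -- group-specific PPV exceeds p̄
    (hPPV : ∀ a, μ ({ω | yhat ω = 1} ∩ A ⁻¹' {a}) ≠ 0 →
      pbar ≤ (μ[|{ω | yhat ω = 1} ∩ A ⁻¹' {a}] {ω | Y ω = 1}).toReal)
    -- group-specific P(Y=1 | ŷ=0, A=a) is below p̄
    (hNPV : ∀ a, μ ({ω | yhat ω = 0} ∩ A ⁻¹' {a}) ≠ 0 →
      (μ[|{ω | yhat ω = 0} ∩ A ⁻¹' {a}] {ω | Y ω = 1}).toReal < pbar)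
    -- the score p̂(ŷ, A) = P(Y=1 | ŷ, A)
    (phat : Ω → ℝ)
    (hphat : phat = fun ω =>
      (μ[|{ω' | yhat ω' = yhat ω} ∩ {ω' | A ω' = A ω}] {ω' | Y ω' = 1}).toReal) :
    -- p̂ is calibrated within groups: E[Y | p̂ = r, A = a] = r
    (∀ r a, μ ({ω | phat ω = r} ∩ A ⁻¹' {a}) ≠ 0 →
      (μ[|{ω | phat ω = r} ∩ A ⁻¹' {a}] {ω | Y ω = 1}).toReal = r) ∧
    -- ŷ = 1{p̂ ≥ p̄} almost surely
    (∀ᵐ ω ∂μ, yhat ω = if pbar ≤ phat ω then (1 : ℝ) else 0) :=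
  ppv_npv_implies_cutoff_of_calibrated_general μ Y yhat hyhatm hyhatval A hAm pbar hPPV hNPV phat
    hphat
end

section
/- Let Y, A, Z be discrete random variables with Y ∈ {0,1}, A ∈ {0,1}, satisfying: Y ⊥ A | Z and Z ⊥ A | Y. Let ε ∈ (0,1) and let η be Bernoulli(ε), independent of (Z, A, Y), and define A_η = A + η (mod 2). Then the triple (Z, A_η, Y) also satisfies Y ⊥ A_η | Z and Z ⊥ A_η | Y, and moreover P(A_η = 1 | Z = z) ∈ (0,1) for every z in the support of Z. -/
/-!
Conditionally on any event `s` generated by `W = (Z, A, Y)`, the coin `η` is still independent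
of `W` with the same law, so for every event `t` generated by `W`,
`P(t, A_η = a | s) = (1 - ε) P(t, A = a | s) + ε P(t, A = !a | s)`.
This is linear in the law of `A` on `t`, hence a product form `P(t, A = b | s) = P(t | s) P(A = b | s)`
is inherited by `A_η`; and `P(A_η = 1 | s)` is a convex combination of `ε` and `1 - ε`.
-/

open MeasureTheory ProbabilityTheory Set

lemma ENNReal.convex_combination_mem_Ioo {x u v : ENNReal} (hx : x ≤ 1)
    (hu : u ∈ Ioo 0 1) (hv : v ∈ Ioo 0 1) : x * u + (1 - x) * v ∈ Ioo 0 1 := by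
  have hconst : ∀ c : ENNReal, x * c + (1 - x) * c = c := fun c => by
    rw [← add_mul, add_tsub_cancel_of_le hx, one_mul]
  constructor
  · calc 0 < min u v := lt_min hu.1 hv.1
      _ = x * min u v + (1 - x) * min u v := (hconst _).symm
      _ ≤ x * u + (1 - x) * v := by gcongr <;> simp
  · calc x * u + (1 - x) * v ≤ x * max u v + (1 - x) * max u v := by gcongr <;> simp
      _ = max u v := hconst _
      _ < 1 := max_lt hu.2 hv.2

lemma ENNReal.one_sub_mem_Ioo {p : ENNReal} (hp : p ∈ Ioo 0 1) : 1 - p ∈ Ioo 0 1 :=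
  ⟨tsub_pos_of_lt hp.2, ENNReal.sub_lt_self ENNReal.one_ne_top one_ne_zero hp.1.ne'⟩

lemma prob_preimage_false {Ω : Type*} [MeasurableSpace Ω] (μ : Measure Ω) [IsProbabilityMeasure μ]
    {f : Ω → Bool} (hf : Measurable f) : μ (f ⁻¹' {false}) = 1 - μ (f ⁻¹' {true}) := by
  rw [← prob_compl_eq_one_sub (hf (measurableSet_singleton true))]
  congr 1
  ext ω
  simp

lemma inter_preimage_xor {Ω : Type*} (A η : Ω → Bool) (s : Set Ω) (a : Bool) :
    s ∩ (fun ω => xor (A ω) (η ω)) ⁻¹' {a} =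
      s ∩ A ⁻¹' {a} ∩ η ⁻¹' {false} ∪ s ∩ A ⁻¹' {!a} ∩ η ⁻¹' {true} := by
  ext ω
  simp only [mem_inter_iff, mem_union, mem_preimage, mem_singleton_iff]
  cases A ω <;> cases η ω <;> cases a <;> simp

section FlipByIndependentCoin

variable {Ω β : Type*} {mΩ : MeasurableSpace Ω} {mβ : MeasurableSpace β} {μ : Measure Ω}
  {W : Ω → β} {A η : Ω → Bool}

lemma measure_inter_preimage_xor (hW : Measurable W) (hA : Measurable[mβ.comap W] A)
    (hη : Measurable η) (hind : IndepFun η W μ) {s : Set Ω} (hs : MeasurableSet[mβ.comap W] s)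
    (a : Bool) :
    μ (s ∩ (fun ω => xor (A ω) (η ω)) ⁻¹' {a}) =
      μ (s ∩ A ⁻¹' {a}) * μ (η ⁻¹' {false}) + μ (s ∩ A ⁻¹' {!a}) * μ (η ⁻¹' {true}) := by
  have hsplit : ∀ b c, μ (s ∩ A ⁻¹' {b} ∩ η ⁻¹' {c}) = μ (s ∩ A ⁻¹' {b}) * μ (η ⁻¹' {c}) :=
    fun b c => hind.symm.meas_inter (hs.inter (hA (measurableSet_singleton b)))
      ⟨{c}, measurableSet_singleton c, rfl⟩
  have hdisj : Disjoint (s ∩ A ⁻¹' {a} ∩ η ⁻¹' {false}) (s ∩ A ⁻¹' {!a} ∩ η ⁻¹' {true}) :=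
    disjoint_left.2 fun ω h₁ h₂ => by simp_all
  have hmeas : MeasurableSet (s ∩ A ⁻¹' {!a} ∩ η ⁻¹' {true}) :=
    (hW.comap_le _ (hs.inter (hA (measurableSet_singleton _)))).inter
      (hη (measurableSet_singleton _))
  rw [inter_preimage_xor, measure_union hdisj hmeas, hsplit, hsplit]

lemma cond_inter_preimage_xor (hW : Measurable W) (hA : Measurable[mβ.comap W] A)
    (hη : Measurable η) (hind : IndepFun η W μ) {s t : Set Ω}
    (hs : MeasurableSet[mβ.comap W] s) (ht : MeasurableSet[mβ.comap W] t) (a : Bool) :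
    μ[|s] (t ∩ (fun ω => xor (A ω) (η ω)) ⁻¹' {a}) =
      μ[|s] (t ∩ A ⁻¹' {a}) * μ (η ⁻¹' {false}) + μ[|s] (t ∩ A ⁻¹' {!a}) * μ (η ⁻¹' {true}) := by
  simp only [cond_apply (hW.comap_le _ hs), ← inter_assoc]
  rw [measure_inter_preimage_xor hW hA hη hind (hs.inter ht), mul_add, mul_assoc, mul_assoc]

lemma cond_preimage_xor (hW : Measurable W) (hA : Measurable[mβ.comap W] A)
    (hη : Measurable η) (hind : IndepFun η W μ) {s : Set Ω}
    (hs : MeasurableSet[mβ.comap W] s) (a : Bool) :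
    μ[|s] ((fun ω => xor (A ω) (η ω)) ⁻¹' {a}) =
      μ[|s] (A ⁻¹' {a}) * μ (η ⁻¹' {false}) + μ[|s] (A ⁻¹' {!a}) * μ (η ⁻¹' {true}) := by
  simpa only [univ_inter] using
    cond_inter_preimage_xor hW hA hη hind hs MeasurableSet.univ a

lemma cond_inter_preimage_xor_eq_mul (hW : Measurable W) (hA : Measurable[mβ.comap W] A)
    (hη : Measurable η) (hind : IndepFun η W μ) {s t : Set Ω}
    (hs : MeasurableSet[mβ.comap W] s) (ht : MeasurableSet[mβ.comap W] t)
    (hcond : ∀ b, μ[|s] (t ∩ A ⁻¹' {b}) = μ[|s] t * μ[|s] (A ⁻¹' {b})) (a : Bool) :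
    μ[|s] (t ∩ (fun ω => xor (A ω) (η ω)) ⁻¹' {a}) =
      μ[|s] t * μ[|s] ((fun ω => xor (A ω) (η ω)) ⁻¹' {a}) := by
  rw [cond_inter_preimage_xor hW hA hη hind hs ht, cond_preimage_xor hW hA hη hind hs,
    hcond, hcond]
  ring

lemma cond_preimage_xor_true_mem_Ioo [IsProbabilityMeasure μ] (hW : Measurable W)
    (hA : Measurable[mβ.comap W] A) (hη : Measurable η) (hind : IndepFun η W μ) {s : Set Ω}
    (hs : MeasurableSet[mβ.comap W] s) (hμs : μ s ≠ 0) (hp : μ (η ⁻¹' {true}) ∈ Ioo 0 1) :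
    μ[|s] ((fun ω => xor (A ω) (η ω)) ⁻¹' {true}) ∈ Ioo 0 1 := by
  have := cond_isProbabilityMeasure (μ := μ) hμs
  rw [cond_preimage_xor hW hA hη hind hs, Bool.not_true,
    prob_preimage_false _ (hA.mono hW.comap_le le_rfl), prob_preimage_false _ hη]
  exact ENNReal.convex_combination_mem_Ioo prob_le_one (ENNReal.one_sub_mem_Ioo hp) hp

end FlipByIndependentCoin

theorem flip_preserves_fairness_conditions_general
    {Ω γ : Type*} [MeasurableSpace Ω] (μ : Measure Ω) [IsProbabilityMeasure μ]
    [MeasurableSpace γ] [MeasurableSingletonClass γ]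
    (Y A η : Ω → Bool) (Z : Ω → γ)
    (hY : Measurable Y) (hA : Measurable A) (hη : Measurable η) (hZ : Measurable Z)
    (ε : ℝ) (hε : ε ∈ Set.Ioo (0 : ℝ) 1)
    -- η is Bernoulli(ε), independent of (Z, A, Y)
    (hηind : IndepFun η (fun ω => (Z ω, A ω, Y ω)) μ)
    (hηlaw : μ (η ⁻¹' {true}) = ENNReal.ofReal ε)
    -- Y ⟂ A | Z
    (hYA_Z : ∀ z, μ (Z ⁻¹' {z}) ≠ 0 → ∀ y a,
      μ[|Z ⁻¹' {z}] (Y ⁻¹' {y} ∩ A ⁻¹' {a}) =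
        μ[|Z ⁻¹' {z}] (Y ⁻¹' {y}) * μ[|Z ⁻¹' {z}] (A ⁻¹' {a}))
    -- Z ⟂ A | Y
    (hZA_Y : ∀ y, μ (Y ⁻¹' {y}) ≠ 0 → ∀ z a,
      μ[|Y ⁻¹' {y}] (Z ⁻¹' {z} ∩ A ⁻¹' {a}) =
        μ[|Y ⁻¹' {y}] (Z ⁻¹' {z}) * μ[|Y ⁻¹' {y}] (A ⁻¹' {a})) :
    -- conclusions for A_η = A xor η
    (∀ z, μ (Z ⁻¹' {z}) ≠ 0 → ∀ y a,
      μ[|Z ⁻¹' {z}] (Y ⁻¹' {y} ∩ (fun ω => xor (A ω) (η ω)) ⁻¹' {a}) =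
        μ[|Z ⁻¹' {z}] (Y ⁻¹' {y}) *
          μ[|Z ⁻¹' {z}] ((fun ω => xor (A ω) (η ω)) ⁻¹' {a})) ∧
    (∀ y, μ (Y ⁻¹' {y}) ≠ 0 → ∀ z a,
      μ[|Y ⁻¹' {y}] (Z ⁻¹' {z} ∩ (fun ω => xor (A ω) (η ω)) ⁻¹' {a}) =
        μ[|Y ⁻¹' {y}] (Z ⁻¹' {z}) *
          μ[|Y ⁻¹' {y}] ((fun ω => xor (A ω) (η ω)) ⁻¹' {a})) ∧
    (∀ z, μ (Z ⁻¹' {z}) ≠ 0 →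
      0 < μ[|Z ⁻¹' {z}] ((fun ω => xor (A ω) (η ω)) ⁻¹' {true}) ∧
        μ[|Z ⁻¹' {z}] ((fun ω => xor (A ω) (η ω)) ⁻¹' {true}) < 1) := by
  set W := fun ω => (Z ω, A ω, Y ω)
  have hW : Measurable W := hZ.prodMk (hA.prodMk hY)
  have hWW : Measurable[MeasurableSpace.comap W inferInstance] W := comap_measurable W
  have hZW : Measurable[MeasurableSpace.comap W inferInstance] Z := measurable_fst.comp hWW
  have hAW : Measurable[MeasurableSpace.comap W inferInstance] A :=
    measurable_fst.comp (measurable_snd.comp hWW)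
  have hYW : Measurable[MeasurableSpace.comap W inferInstance] Y :=
    measurable_snd.comp (measurable_snd.comp hWW)
  have hp : μ (η ⁻¹' {true}) ∈ Ioo 0 1 := by
    rw [hηlaw]
    exact ⟨ENNReal.ofReal_pos.2 hε.1, ENNReal.ofReal_lt_one.2 hε.2⟩
  refine ⟨fun z hz y => ?_, fun y hy z => ?_, fun z hz => ?_⟩
  · exact cond_inter_preimage_xor_eq_mul hW hAW hη hηind (hZW (measurableSet_singleton z))
      (hYW (measurableSet_singleton y)) (hYA_Z z hz y)
  · exact cond_inter_preimage_xor_eq_mul hW hAW hη hηind (hYW (measurableSet_singleton y))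
      (hZW (measurableSet_singleton z)) (hZA_Y y hy z)
  · exact cond_preimage_xor_true_mem_Ioo hW hAW hη hηind (hZW (measurableSet_singleton z)) hz hp

/-- Perturbation lemma: flipping the group label A with an
independent Bernoulli(ε) coin η preserves both conditional independence
conditions Y ⟂ A_η | Z and Z ⟂ A_η | Y, and makes A_η non-degenerate
conditionally on Z: P(A_η = 1 | Z = z) ∈ (0, 1) on the support of Z. -/
theorem flip_preserves_fairness_conditions
    {Ω γ : Type*} [MeasurableSpace Ω] (μ : Measure Ω) [IsProbabilityMeasure μ]
    [MeasurableSpace γ] [MeasurableSingletonClass γ] [Countable γ]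
    (Y A η : Ω → Bool) (Z : Ω → γ)
    (hY : Measurable Y) (hA : Measurable A) (hη : Measurable η) (hZ : Measurable Z)
    (ε : ℝ) (hε : ε ∈ Set.Ioo (0 : ℝ) 1)
    -- η is Bernoulli(ε), independent of (Z, A, Y)
    (hηind : IndepFun η (fun ω => (Z ω, A ω, Y ω)) μ)
    (hηlaw : μ (η ⁻¹' {true}) = ENNReal.ofReal ε)
    -- Y ⟂ A | Z
    (hYA_Z : ∀ z, μ (Z ⁻¹' {z}) ≠ 0 → ∀ y a,
      μ[|Z ⁻¹' {z}] (Y ⁻¹' {y} ∩ A ⁻¹' {a}) =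
        μ[|Z ⁻¹' {z}] (Y ⁻¹' {y}) * μ[|Z ⁻¹' {z}] (A ⁻¹' {a}))
    -- Z ⟂ A | Y
    (hZA_Y : ∀ y, μ (Y ⁻¹' {y}) ≠ 0 → ∀ z a,
      μ[|Y ⁻¹' {y}] (Z ⁻¹' {z} ∩ A ⁻¹' {a}) =
        μ[|Y ⁻¹' {y}] (Z ⁻¹' {z}) * μ[|Y ⁻¹' {y}] (A ⁻¹' {a})) :
    -- conclusions for A_η = A xor η
    (∀ z, μ (Z ⁻¹' {z}) ≠ 0 → ∀ y a,
      μ[|Z ⁻¹' {z}] (Y ⁻¹' {y} ∩ (fun ω => xor (A ω) (η ω)) ⁻¹' {a}) =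
        μ[|Z ⁻¹' {z}] (Y ⁻¹' {y}) *
          μ[|Z ⁻¹' {z}] ((fun ω => xor (A ω) (η ω)) ⁻¹' {a})) ∧
    (∀ y, μ (Y ⁻¹' {y}) ≠ 0 → ∀ z a,
      μ[|Y ⁻¹' {y}] (Z ⁻¹' {z} ∩ (fun ω => xor (A ω) (η ω)) ⁻¹' {a}) =
        μ[|Y ⁻¹' {y}] (Z ⁻¹' {z}) *
          μ[|Y ⁻¹' {y}] ((fun ω => xor (A ω) (η ω)) ⁻¹' {a})) ∧
    (∀ z, μ (Z ⁻¹' {z}) ≠ 0 →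
      0 < μ[|Z ⁻¹' {z}] ((fun ω => xor (A ω) (η ω)) ⁻¹' {true}) ∧
        μ[|Z ⁻¹' {z}] ((fun ω => xor (A ω) (η ω)) ⁻¹' {true}) < 1) :=
  flip_preserves_fairness_conditions_general μ Y A η Z hY hA hη hZ ε hε hηind hηlaw hYA_Z hZA_Y
end
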